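/- Let ρ be a density operator on 𝓗_S ⊗ 𝓗_B that is supported in the total-energy eigenspace of H_S ⊗ I + I ⊗ H_B with eigenvalue E_L (i.e., (H_S⊗I + I⊗H_B)ρ = E_L ρ = ρ(H_S⊗I + I⊗H_B)). Then the reduced density matrix ρ_S = Tr_B ρ is block-diagonal with respect to the spectral decomposition of H_S: Π(ε) ρ_S Π(ε') = 0 whenever ε ≠ ε'. -/
import Mathlib


open Matrix BigOperators Kronecker ComplexOrder

/-- A total state supported in a single total-energy eigenspace of
`H_S ⊗ 1 + 1 ⊗ H_B` has a block-diagonal reduced density matrix: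
`Π(ε) (Tr_B ρ) Π(ε') = 0` whenever `ε ≠ ε'`. -/
theorem reduced_state_block_diagonal {nS nB : ℕ}
    (HS : Matrix (Fin nS) (Fin nS) ℂ) (HB : Matrix (Fin nB) (Fin nB) ℂ)
    (hHS : HS.IsHermitian) (hHB : HB.IsHermitian)
    (sS : Finset ℝ) (P : ℝ → Matrix (Fin nS) (Fin nS) ℂ)
    (hPHerm : ∀ ε, (P ε)ᴴ = P ε)
    (hcomplete : ∑ ε ∈ sS, P ε = 1)
    (hspec : HS = ∑ ε ∈ sS, (ε : ℂ) • P ε)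
    (hproj : ∀ ε, P ε * P ε = P ε)
    (horth : ∀ ε ε', ε ≠ ε' → P ε * P ε' = 0)
    (ρ : Matrix (Fin nS × Fin nB) (Fin nS × Fin nB) ℂ)
    (hρpos : ρ.PosSemidef) (hρtr : ρ.trace = 1)
    (EL : ℝ)
    (hsupL : (HS ⊗ₖ (1 : Matrix (Fin nB) (Fin nB) ℂ)
        + (1 : Matrix (Fin nS) (Fin nS) ℂ) ⊗ₖ HB) * ρ = (EL : ℂ) • ρ)
    (hsupR : ρ * (HS ⊗ₖ (1 : Matrix (Fin nB) (Fin nB) ℂ)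
        + (1 : Matrix (Fin nS) (Fin nS) ℂ) ⊗ₖ HB) = (EL : ℂ) • ρ)
    -- the reduced density matrix: partial trace over the environment B
    (ρS : Matrix (Fin nS) (Fin nS) ℂ)
    (hρS : ρS = Matrix.of fun i j => ∑ k : Fin nB, ρ (i, k) (j, k)) :
    ∀ ε ∈ sS, ∀ ε' ∈ sS, ε ≠ ε' → P ε * ρS * P ε' = 0 := by
  intro ε hε ε' hε' hne
  have h := hsupL.trans hsupR.symm
  have hcomm : HS * ρS = ρS * HS := by
    ext i j
    have h2 : ∑ k : Fin nB,
        ((HS ⊗ₖ (1 : Matrix (Fin nB) (Fin nB) ℂ)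
          + (1 : Matrix (Fin nS) (Fin nS) ℂ) ⊗ₖ HB) * ρ) (i,k) (j,k)
        = ∑ k : Fin nB, (ρ * (HS ⊗ₖ (1 : Matrix (Fin nB) (Fin nB) ℂ)
          + (1 : Matrix (Fin nS) (Fin nS) ℂ) ⊗ₖ HB)) (i,k) (j,k) := by
      rw [h]
    simp only [Matrix.mul_apply, hρS, Matrix.of_apply, Matrix.add_apply,
      Matrix.kroneckerMap_apply, Matrix.one_apply, Fintype.sum_prod_type,
      ite_mul, mul_ite, one_mul, mul_one, zero_mul, mul_zero,
      Finset.sum_ite_eq, Finset.sum_ite_eq', Finset.mem_univ, if_true,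
      Finset.sum_add_distrib, add_mul, mul_add, Finset.mul_sum,
      Finset.sum_mul] at h2 ⊢
    have hHBterm : ∑ k : Fin nB, ∑ l : Fin nB, HB k l * ρ (i,l) (j,k)
        = ∑ k : Fin nB, ∑ l : Fin nB, ρ (i,k) (j,l) * HB l k := by
      rw [Finset.sum_comm]
      exact Finset.sum_congr rfl fun l _ => Finset.sum_congr rfl fun k _ => mul_comm _ _
    -- goal: ∑ m, HS i m * ∑ k, ρ (m,k)(j,k) = ∑ m, (∑ k, ρ(i,k)(m,k)) * HS m j
    have e1 : ∀ (f : Fin nS → Fin nB → ℂ),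
        ∑ x_1 : Fin nS, ∑ x_2 : Fin nB, (if i = x_1 then f x_1 x_2 else 0)
          = ∑ x_2 : Fin nB, f i x_2 := by
      intro f; rw [Finset.sum_comm]; simp
    have e2 : ∀ (f : Fin nS → Fin nB → ℂ),
        ∑ x_1 : Fin nS, ∑ x_2 : Fin nB, (if x_1 = j then f x_1 x_2 else 0)
          = ∑ x_2 : Fin nB, f j x_2 := by
      intro f; rw [Finset.sum_comm]; simp
    simp only [e1, e2] at h2
    rw [hHBterm] at h2
    have h3 := add_right_cancel h2
    rw [Finset.sum_comm]; rw [h3]; exact Finset.sum_comm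
  have hPHS : P ε * HS = (ε : ℂ) • P ε := by
    rw [hspec, Finset.mul_sum]
    rw [Finset.sum_eq_single ε]
    · rw [Matrix.mul_smul, hproj]
    · intro b hb hbne
      rw [Matrix.mul_smul, horth ε b (Ne.symm hbne), smul_zero]
    · intro hh; exact absurd hε hh
  have hHSP : HS * P ε' = (ε' : ℂ) • P ε' := by
    rw [hspec, Finset.sum_mul]
    rw [Finset.sum_eq_single ε']
    · rw [Matrix.smul_mul, hproj]
    · intro b hb hbne
      rw [Matrix.smul_mul, horth b ε' hbne, smul_zero]
    · intro hh; exact absurd hε' hh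
  have key : (ε : ℂ) • (P ε * ρS * P ε') = (ε' : ℂ) • (P ε * ρS * P ε') := by
    calc (ε : ℂ) • (P ε * ρS * P ε') = ((ε : ℂ) • P ε) * ρS * P ε' := by
          rw [Matrix.smul_mul, Matrix.smul_mul]
      _ = P ε * HS * ρS * P ε' := by rw [hPHS]
      _ = P ε * (HS * ρS) * P ε' := by rw [mul_assoc (P ε)]
      _ = P ε * (ρS * HS) * P ε' := by rw [hcomm]
      _ = P ε * ρS * (HS * P ε') := by rw [← mul_assoc, ← mul_assoc, mul_assoc _ HS]
      _ = (ε' : ℂ) • (P ε * ρS * P ε') := by rw [hHSP, Matrix.mul_smul]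
  have hsub : ((ε : ℂ) - (ε' : ℂ)) • (P ε * ρS * P ε') = 0 := by
    rw [sub_smul, key, sub_self]
  rcases smul_eq_zero.mp hsub with h0 | h0
  · exact absurd (by exact_mod_cast sub_eq_zero.mp h0) hne
  · exact h0
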